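/- arXiv:1709.02468 — 4 statements merged into one kernel-verified Lean document; each statement's English description precedes it below -/
import Mathlib

section
/- Discrete integration by parts for the divergence/gradient pair: for any discrete normal vector field u : E → ℝ and any discrete cell field ψ : C → ℝ, one has (u, ∇_h ψ)_{0,h} = −(1/2) (∇_h·u, ψ)_{0,h}; explicitly, Σ_{e∈E} u_e · ( −(1/d_e) Σ_{i∈C} ψ_i n_{e,i} ) · ( (1/2) d_e l_e ) = −(1/2) Σ_{i∈C} ( (1/A_i) Σ_{e∈E} u_e l_e n_{e,i} ) · ψ_i · A_i, provided d_e ≠ 0 for every edge e and A_i ≠ 0 for every cell i. -/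
open Finset

theorem sum_mul_sum_mul_comm {R C E : Type*} [CommSemiring R] [Fintype C] [Fintype E]
    (w : E → R) (n : E → C → R) (ψ : C → R) :
    ∑ e, w e * ∑ i, ψ i * n e i = ∑ i, (∑ e, w e * n e i) * ψ i := by
  simp only [mul_sum, sum_mul]
  rw [sum_comm]
  exact sum_congr rfl fun _ _ => sum_congr rfl fun _ _ => by ring

theorem mul_neg_one_div_mul_half_mul {K : Type*} [Field K] {d : K} (hd : d ≠ 0) (a s l : K) :
    a * (-(1 / d) * s) * (1 / 2 * d * l) = -(1 / 2) * (a * l * s) := by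
  field_simp

theorem one_div_mul_mul_mul_cancel {K : Type*} [Field K] {A : K} (hA : A ≠ 0) (x y : K) :
    1 / A * x * y * A = x * y := by
  field_simp

/-- Discrete integration by parts for the divergence/gradient pair on an
unstructured primal-dual mesh: `(u, ∇_h ψ)_{0,h} = -(1/2) (∇_h·u, ψ)_{0,h}`. -/
theorem discrete_integration_by_parts_div_grad
    {C E : Type*} [Fintype C] [Fintype E]
    (d l : E → ℝ) (A : C → ℝ) (n : E → C → ℝ)
    (u : E → ℝ) (ψ : C → ℝ)
    (hd : ∀ e, d e ≠ 0) (hA : ∀ i, A i ≠ 0) :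
    ∑ e, u e * (-(1 / d e) * ∑ i, ψ i * n e i) * (1 / 2 * d e * l e) =
      -(1 / 2) * ∑ i, (1 / A i * ∑ e, u e * l e * n e i) * ψ i * A i := by
  calc ∑ e, u e * (-(1 / d e) * ∑ i, ψ i * n e i) * (1 / 2 * d e * l e)
      = -(1 / 2) * ∑ e, u e * l e * ∑ i, ψ i * n e i := by
        rw [mul_sum]
        exact sum_congr rfl fun e _ => mul_neg_one_div_mul_half_mul (hd e) _ _ _
    _ = -(1 / 2) * ∑ i, (∑ e, u e * l e * n e i) * ψ i := by
        rw [sum_mul_sum_mul_comm]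
    _ = -(1 / 2) * ∑ i, (1 / A i * ∑ e, u e * l e * n e i) * ψ i * A i := by
        congr 1
        exact sum_congr rfl fun i _ => (one_div_mul_mul_mul_cancel (hA i) _ _).symm
end

section
/- Conservation of the potential enstrophy by the continuous pure transport dynamics on a rectangle: let M = [a₁,b₁] × [a₂,b₂] ⊂ ℝ² be a nondegenerate closed rectangle, and let u = (u₁,u₂) : ℝ² → ℝ² be continuously differentiable on a neighborhood of M with ∂₁u₁ + ∂₂u₂ = 0 on M, with u₁ = 0 on the two faces where x₁ ∈ {a₁,b₁} and u₂ = 0 on the two faces where x₂ ∈ {a₂,b₂}. Let q : ℝ × ℝ² → ℝ be continuously differentiable on ℝ × (a neighborhood of M) and satisfy the transport equation ∂_t q(t,x) + u(x)·∇_x q(t,x) = 0 for all t ∈ ℝ and x ∈ M. Then the potential enstrophy t ↦ ∫_M q(t,x)² dx is constant in t. -/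
/-!
Since `q` is `C¹` near the compact rectangle `M`, one may differentiate under the integral:
`d/dt ∫_M q² = ∫_M ∂ₜ(q²)`. Squaring preserves the transport equation, and as `div u = 0`,
`∂ₜ(q²) = -u·∇(q²) = -div(q² u)`. By the divergence theorem the integral of `div(q² u)` over `M`
is the outward flux of `q² u`, which vanishes because `u·n = 0` on `∂M`.
-/

open MeasureTheory

/-- Time partial derivative of `q : ℝ × (ℝ × ℝ) → ℝ`. -/
noncomputable def pdt (q : ℝ × (ℝ × ℝ) → ℝ) (p : ℝ × (ℝ × ℝ)) : ℝ :=
  fderiv ℝ q p (1, (0, 0))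

/-- Spatial partial derivative of `q : ℝ × (ℝ × ℝ) → ℝ` in the first space
direction. -/
noncomputable def pdx1 (q : ℝ × (ℝ × ℝ) → ℝ) (p : ℝ × (ℝ × ℝ)) : ℝ :=
  fderiv ℝ q p (0, (1, 0))

/-- Spatial partial derivative of `q : ℝ × (ℝ × ℝ) → ℝ` in the second space
direction. -/
noncomputable def pdx2 (q : ℝ × (ℝ × ℝ) → ℝ) (p : ℝ × (ℝ × ℝ)) : ℝ :=
  fderiv ℝ q p (0, (0, 1))

open Set

section Slices

variable {E G : Type*} [NormedAddCommGroup E] [NormedSpace ℝ E]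
  [NormedAddCommGroup G] [NormedSpace ℝ G] {F : ℝ × E → G} {t : ℝ} {x : E}

theorem DifferentiableAt.hasDerivAt_comp_prodMk_left (hF : DifferentiableAt ℝ F (t, x)) :
    HasDerivAt (fun s => F (s, x)) (fderiv ℝ F (t, x) (1, 0)) t := by
  simpa [Function.comp_def] using
    hF.hasFDerivAt.comp_hasDerivAt t (hasFDerivAt_prodMk_left t x).hasDerivAt

theorem DifferentiableAt.fderiv_comp_prodMk_right_apply (hF : DifferentiableAt ℝ F (t, x))
    (w : E) : fderiv ℝ (fun y => F (t, y)) x w = fderiv ℝ F (t, x) (0, w) :=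
  DFunLike.congr_fun (hF.hasFDerivAt.comp x (hasFDerivAt_prodMk_right t x)).fderiv w

end Slices

theorem hasDerivAt_setIntegral_of_contDiffOn {E : Type*} [NormedAddCommGroup E]
    [NormedSpace ℝ E] [MeasurableSpace E] [OpensMeasurableSpace E]
    {μ : Measure E} [IsFiniteMeasureOnCompacts μ] {F : ℝ × E → ℝ} {U K : Set E}
    (hU : IsOpen U) (hK : IsCompact K) (hKU : K ⊆ U)
    (hF : ContDiffOn ℝ 1 F (univ ×ˢ U)) (t : ℝ) :
    HasDerivAt (fun s => ∫ x in K, F (s, x) ∂μ) (∫ x in K, fderiv ℝ F (t, x) (1, 0) ∂μ) t := by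
  have hUo : IsOpen (univ ×ˢ U : Set (ℝ × E)) := isOpen_univ.prod hU
  have hKm : MeasurableSet K := hK.measurableSet
  have hmaps : ∀ s : ℝ, MapsTo (fun x => (s, x)) K (univ ×ˢ U) := fun s x hx =>
    ⟨mem_univ s, hKU hx⟩
  have hslice : ∀ s : ℝ, ContinuousOn (fun x => F (s, x)) K := fun s =>
    hF.continuousOn.comp (Continuous.prodMk_right s).continuousOn (hmaps s)
  have hF' : ContinuousOn (fun p => fderiv ℝ F p (1, 0)) (univ ×ˢ U) :=
    (hF.continuousOn_fderiv_of_isOpen hUo le_rfl).clm_apply continuousOn_const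
  obtain ⟨C, hC⟩ : ∃ C, ∀ p ∈ Icc (t - 1) (t + 1) ×ˢ K, ‖fderiv ℝ F p (1, 0)‖ ≤ C :=
    (isCompact_Icc.prod hK).exists_bound_of_continuousOn
      (hF'.mono (prod_mono (subset_univ _) hKU))
  refine (hasDerivAt_integral_of_dominated_loc_of_deriv_le (bound := fun _ => C)
    (F' := fun s x => fderiv ℝ F (s, x) (1, 0)) (Metric.ball_mem_nhds t one_pos)
    (.of_forall fun s => ?_) ?_ ?_ ?_ (integrableOn_const hK.measure_lt_top.ne) ?_).2
  · exact (hslice s).aestronglyMeasurable hKm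
  · exact (hslice t).integrableOn_compact hK
  · exact (hF'.comp (Continuous.prodMk_right t).continuousOn (hmaps t)).aestronglyMeasurable hKm
  · refine (ae_restrict_mem hKm).mono fun x hx s hs => hC (s, x) ⟨?_, hx⟩
    rw [Real.ball_eq_Ioo] at hs
    exact Ioo_subset_Icc_self hs
  · refine (ae_restrict_mem hKm).mono fun x hx s _ => ?_
    exact DifferentiableAt.hasDerivAt_comp_prodMk_left
      ((hF.contDiffAt (hUo.mem_nhds (hmaps s hx))).differentiableAt one_ne_zero)

noncomputable def planarDivergence (v : ℝ × ℝ → ℝ × ℝ) (x : ℝ × ℝ) : ℝ :=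
  fderiv ℝ (fun y => (v y).1) x (1, 0) + fderiv ℝ (fun y => (v y).2) x (0, 1)

theorem planarDivergence_smul {φ : ℝ × ℝ → ℝ} {v : ℝ × ℝ → ℝ × ℝ} {x : ℝ × ℝ}
    (hφ : DifferentiableAt ℝ φ x) (hv : DifferentiableAt ℝ v x) :
    planarDivergence (fun y => φ y • v y) x =
      φ x * planarDivergence v x +
        ((v x).1 * fderiv ℝ φ x (1, 0) + (v x).2 * fderiv ℝ φ x (0, 1)) := by
  have h1 := fderiv_mul hφ hv.fst
  have h2 := fderiv_mul hφ hv.snd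
  simp only [planarDivergence, Prod.smul_fst, Prod.smul_snd, smul_eq_mul]
  simp only [Pi.mul_def] at h1 h2
  rw [h1, h2]
  simp only [FunLike.coe_add, FunLike.coe_smul, Pi.add_apply, Pi.smul_apply, smul_eq_mul]
  ring

theorem setIntegral_planarDivergence_eq_zero {a₁ b₁ a₂ b₂ : ℝ} {v : ℝ × ℝ → ℝ × ℝ}
    {U : Set (ℝ × ℝ)} (hU : IsOpen U) (hMU : Icc a₁ b₁ ×ˢ Icc a₂ b₂ ⊆ U)
    (hv : ContDiffOn ℝ 1 v U)
    (hbc1 : ∀ x ∈ Icc a₁ b₁ ×ˢ Icc a₂ b₂, (x.1 = a₁ ∨ x.1 = b₁) → (v x).1 = 0)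
    (hbc2 : ∀ x ∈ Icc a₁ b₁ ×ˢ Icc a₂ b₂, (x.2 = a₂ ∨ x.2 = b₂) → (v x).2 = 0) :
    ∫ x in Icc a₁ b₁ ×ˢ Icc a₂ b₂, planarDivergence v x = 0 := by
  rcases (Icc a₁ b₁ ×ˢ Icc a₂ b₂).eq_empty_or_nonempty with hempty | ⟨_, hx₁, hx₂⟩
  · rw [hempty, Measure.restrict_empty, integral_zero_measure]
  have hle : (a₁, a₂) ≤ (b₁, b₂) := ⟨hx₁.1.trans hx₁.2, hx₂.1.trans hx₂.2⟩
  have hcont : ContinuousOn (fun x => planarDivergence v x) U :=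
    (((hv.fst.continuousOn_fderiv_of_isOpen hU le_rfl).clm_apply continuousOn_const).add
      ((hv.snd.continuousOn_fderiv_of_isOpen hU le_rfl).clm_apply continuousOn_const))
  have integral_edge : ∀ (h : ℝ → ℝ) (a b : ℝ), a ≤ b → (∀ s ∈ Icc a b, h s = 0) →
      ∫ s in a..b, h s = 0 := fun h a b hab hh => by
    rw [intervalIntegral.integral_congr (g := fun _ => 0) (by rwa [uIcc_of_le hab]),
      intervalIntegral.integral_zero]
  have hint : ∀ x ∈ Ioo a₁ b₁ ×ˢ Ioo a₂ b₂, DifferentiableAt ℝ v x := fun x hx =>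
    (hv.differentiableOn one_ne_zero).differentiableAt
      (hU.mem_nhds (hMU ⟨Ioo_subset_Icc_self hx.1, Ioo_subset_Icc_self hx.2⟩))
  rw [Icc_prod_Icc] at hMU ⊢
  unfold planarDivergence
  rw [integral_divergence_prod_Icc_of_hasFDerivAt_of_le _ _ _ _ _ _ hle
    (hv.fst.continuousOn.mono hMU) (hv.snd.continuousOn.mono hMU)
    (fun x hx => (hint x hx).fst.hasFDerivAt) (fun x hx => (hint x hx).snd.hasFDerivAt)
    ((hcont.mono hMU).integrableOn_compact isCompact_Icc)]
  rw [integral_edge _ _ _ hle.1 fun s hs => hbc2 (s, b₂) ⟨hs, right_mem_Icc.2 hle.2⟩ (.inr rfl),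
    integral_edge _ _ _ hle.1 fun s hs => hbc2 (s, a₂) ⟨hs, left_mem_Icc.2 hle.2⟩ (.inl rfl),
    integral_edge _ _ _ hle.2 fun s hs => hbc1 (b₁, s) ⟨right_mem_Icc.2 hle.1, hs⟩ (.inr rfl),
    integral_edge _ _ _ hle.2 fun s hs => hbc1 (a₁, s) ⟨left_mem_Icc.2 hle.1, hs⟩ (.inl rfl)]
  norm_num

theorem pdt_add_advection_sq {q : ℝ × (ℝ × ℝ) → ℝ} {p : ℝ × (ℝ × ℝ)}
    (hq : DifferentiableAt ℝ q p) (c₁ c₂ : ℝ) :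
    pdt (fun p => q p ^ 2) p + c₁ * pdx1 (fun p => q p ^ 2) p + c₂ * pdx2 (fun p => q p ^ 2) p =
      2 * q p * (pdt q p + c₁ * pdx1 q p + c₂ * pdx2 q p) := by
  simp only [pdt, pdx1, pdx2, (hq.hasFDerivAt.pow 2).fderiv, Nat.add_one_sub_one, pow_one,
    nsmul_eq_mul, Nat.cast_ofNat, smul_apply, smul_eq_mul]
  ring

theorem pdt_sq_eq_neg_planarDivergence_sq_smul {q : ℝ × (ℝ × ℝ) → ℝ} {u : ℝ × ℝ → ℝ × ℝ}
    {t : ℝ} {x : ℝ × ℝ} (hq : DifferentiableAt ℝ q (t, x)) (hu : DifferentiableAt ℝ u x)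
    (hdiv : planarDivergence u x = 0)
    (htransport : pdt q (t, x) + (u x).1 * pdx1 q (t, x) + (u x).2 * pdx2 q (t, x) = 0) :
    pdt (fun p => q p ^ 2) (t, x) = -planarDivergence (fun y => q (t, y) ^ 2 • u y) x := by
  have hq2 : DifferentiableAt ℝ (fun p => q p ^ 2) (t, x) := hq.pow 2
  have hsq := pdt_add_advection_sq hq (u x).1 (u x).2
  rw [htransport, mul_zero] at hsq
  rw [planarDivergence_smul (φ := fun y => q (t, y) ^ 2)
      (hq2.comp x (hasFDerivAt_prodMk_right t x).differentiableAt) hu,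
    hdiv, hq2.fderiv_comp_prodMk_right_apply, hq2.fderiv_comp_prodMk_right_apply]
  unfold pdx1 pdx2 at hsq
  linear_combination hsq

theorem potential_enstrophy_conserved_continuous_transport_general
    (a₁ b₁ a₂ b₂ : ℝ)
    (M : Set (ℝ × ℝ)) (hM : M = Set.Icc a₁ b₁ ×ˢ Set.Icc a₂ b₂)
    (u : ℝ × ℝ → ℝ × ℝ)
    (hu : ∃ U : Set (ℝ × ℝ), IsOpen U ∧ M ⊆ U ∧ ContDiffOn ℝ 1 u U)
    (hdiv : ∀ x ∈ M,
      fderiv ℝ (fun y => (u y).1) x (1, 0) + fderiv ℝ (fun y => (u y).2) x (0, 1) = 0)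
    (hbc1 : ∀ x ∈ M, (x.1 = a₁ ∨ x.1 = b₁) → (u x).1 = 0)
    (hbc2 : ∀ x ∈ M, (x.2 = a₂ ∨ x.2 = b₂) → (u x).2 = 0)
    (q : ℝ × (ℝ × ℝ) → ℝ)
    (hq : ∃ U : Set (ℝ × ℝ), IsOpen U ∧ M ⊆ U ∧
      ContDiffOn ℝ 1 q (Set.univ ×ˢ U))
    (htransport : ∀ t : ℝ, ∀ x ∈ M,
      pdt q (t, x) + (u x).1 * pdx1 q (t, x) + (u x).2 * pdx2 q (t, x) = 0) :
    ∀ t₁ t₂ : ℝ, (∫ x in M, q (t₁, x) ^ 2) = ∫ x in M, q (t₂, x) ^ 2 := by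
  obtain ⟨Uu, hUuo, hMUu, hu⟩ := hu
  obtain ⟨Uq, hUqo, hMUq, hq⟩ := hq
  have hUo : IsOpen (Uu ∩ Uq) := hUuo.inter hUqo
  have hMU : M ⊆ Uu ∩ Uq := subset_inter hMUu hMUq
  have hMc : IsCompact M := hM ▸ isCompact_Icc.prod isCompact_Icc
  have huU : ContDiffOn ℝ 1 u (Uu ∩ Uq) := hu.mono inter_subset_left
  have hqU : ContDiffOn ℝ 1 q (univ ×ˢ (Uu ∩ Uq)) := hq.mono (prod_mono_right inter_subset_right)
  have hflux : ∀ t, ∫ x in M, planarDivergence (fun y => q (t, y) ^ 2 • u y) x = 0 := by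
    intro t
    subst hM
    refine setIntegral_planarDivergence_eq_zero hUo hMU ?_ ?_ ?_
    · exact ((hqU.pow 2).comp (contDiff_prodMk_right t).contDiffOn
        fun x hx => ⟨mem_univ t, hx⟩).smul huU
    · exact fun x hx hx₁ => by simp [hbc1 x hx hx₁]
    · exact fun x hx hx₂ => by simp [hbc2 x hx hx₂]
  have hpdt : ∀ t, ∀ x ∈ M,
      pdt (fun p => q p ^ 2) (t, x) = -planarDivergence (fun y => q (t, y) ^ 2 • u y) x :=
    fun t x hx => pdt_sq_eq_neg_planarDivergence_sq_smul
      ((hqU.differentiableOn one_ne_zero).differentiableAt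
        ((isOpen_univ.prod hUo).mem_nhds ⟨mem_univ t, hMU hx⟩))
      ((huU.differentiableOn one_ne_zero).differentiableAt (hUo.mem_nhds (hMU hx)))
      (hdiv x hx) (htransport t x hx)
  have hderiv : ∀ t, HasDerivAt (fun s => ∫ x in M, q (s, x) ^ 2) 0 t := by
    intro t
    have hleibniz : HasDerivAt (fun s => ∫ x in M, q (s, x) ^ 2)
        (∫ x in M, pdt (fun p => q p ^ 2) (t, x)) t :=
      hasDerivAt_setIntegral_of_contDiffOn hUo hMc hMU (hqU.pow 2) t
    rwa [setIntegral_congr_fun hMc.measurableSet (hpdt t), integral_neg, hflux, neg_zero]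
      at hleibniz
  exact is_const_of_deriv_eq_zero (fun t => (hderiv t).differentiableAt) fun t => (hderiv t).deriv

/-- Conservation of the potential enstrophy by the continuous pure transport
dynamics on a rectangle: if `u` is divergence free on the rectangle `M`, `C¹`
near `M`, satisfies the no-flux boundary condition on `∂M`, and `q` solves the
transport equation `∂_t q + u·∇_x q = 0` on `ℝ × M`, then the potential
enstrophy `t ↦ ∫_M q(t,x)² dx` is constant in time. -/
theorem potential_enstrophy_conserved_continuous_transport
    (a₁ b₁ a₂ b₂ : ℝ) (h1 : a₁ < b₁) (h2 : a₂ < b₂)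
    (M : Set (ℝ × ℝ)) (hM : M = Set.Icc a₁ b₁ ×ˢ Set.Icc a₂ b₂)
    (u : ℝ × ℝ → ℝ × ℝ)
    (hu : ∃ U : Set (ℝ × ℝ), IsOpen U ∧ M ⊆ U ∧ ContDiffOn ℝ 1 u U)
    (hdiv : ∀ x ∈ M,
      fderiv ℝ (fun y => (u y).1) x (1, 0) + fderiv ℝ (fun y => (u y).2) x (0, 1) = 0)
    (hbc1 : ∀ x ∈ M, (x.1 = a₁ ∨ x.1 = b₁) → (u x).1 = 0)
    (hbc2 : ∀ x ∈ M, (x.2 = a₂ ∨ x.2 = b₂) → (u x).2 = 0)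
    (q : ℝ × (ℝ × ℝ) → ℝ)
    (hq : ∃ U : Set (ℝ × ℝ), IsOpen U ∧ M ⊆ U ∧
      ContDiffOn ℝ 1 q (Set.univ ×ˢ U))
    (htransport : ∀ t : ℝ, ∀ x ∈ M,
      pdt q (t, x) + (u x).1 * pdx1 q (t, x) + (u x).2 * pdx2 q (t, x) = 0) :
    ∀ t₁ t₂ : ℝ, (∫ x in M, q (t₁, x) ^ 2) = ∫ x in M, q (t₂, x) ^ 2 :=
  potential_enstrophy_conserved_continuous_transport_general a₁ b₁ a₂ b₂ M hM u hu hdiv hbc1 hbc2 q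
    hq htransport
end

section
/- Averaged-advection form of the discrete potential-vorticity flux divergence: fix a cell i and let EC(i) be the finite set of its edges. Assume each edge e ∈ EC(i) has d_e ≠ 0 and a real weight l_e, is shared with exactly one other cell c(e), and carries direction indicators n_{e,i} ∈ {1,−1} and n_{e,c(e)} = −n_{e,i}. Given cell values (q_j) and edge normal velocities (u_e), set q̂_e = (q_i + q_{c(e)})/2, [∇_h q]_e = −(1/d_e)(q_i n_{e,i} + q_{c(e)} n_{e,c(e)}), and A_e = (1/2) d_e l_e. If the discrete divergence-free condition Σ_{e∈EC(i)} u_e l_e n_{e,i} = 0 holds, then Σ_{e∈EC(i)} q̂_e u_e l_e n_{e,i} = Σ_{e∈EC(i)} A_e [∇_h q]_e u_e. In particular, under the semi-discrete pure transport scheme dq_i/dt + (1/A_i) Σ_{e∈EC(i)} q̂_e u_e l_e n_{e,i} = 0 with A_i ≠ 0, the potential vorticity on cell i evolves by dq_i/dt + Σ_{e∈EC(i)} (A_e/A_i)[∇_h q]_e u_e = 0, a weighted combination of the discrete advection terms [∇_h q]_e u_e across the edges of cell i. -/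
open Finset

/-!
On each edge the centred value splits as `q̂_e = q_i + (q_{c(e)} - q_i) / 2`, and the half-jump
times `l_e n_{e,i}` is exactly `A_e [∇_h q]_e` because `A_e` carries the factor `d_e` that
`[∇_h q]_e` divides by. Summing over the edges, the `q_i` part is `q_i` times the discrete
divergence, which vanishes.
-/

lemma averaged_edge_flux_eq {d l u n qi qc : ℝ} (hd : d ≠ 0) :
    (qi + qc) / 2 * u * l * n
      = 1 / 2 * d * l * (-(1 / d) * (qi * n + qc * (-n))) * u + qi * (u * l * n) := by
  field_simp
  ring

lemma sum_averaged_flux_eq_sum_area_mul_grad {E : Type*} (s : Finset E)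
    (d l u n qc : E → ℝ) (qi : ℝ) (hd : ∀ e ∈ s, d e ≠ 0)
    (hdiv : ∑ e ∈ s, u e * l e * n e = 0) :
    ∑ e ∈ s, (qi + qc e) / 2 * u e * l e * n e
      = ∑ e ∈ s, 1 / 2 * d e * l e * (-(1 / d e) * (qi * n e + qc e * (-n e))) * u e := by
  rw [sum_congr rfl fun e he => averaged_edge_flux_eq (hd e he), sum_add_distrib,
    ← mul_sum, hdiv, mul_zero, add_zero]

lemma sum_div_mul_mul_eq_one_div_mul_sum {E : Type*} (s : Finset E) (a b c : E → ℝ) (A : ℝ) :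
    ∑ e ∈ s, a e / A * b e * c e = 1 / A * ∑ e ∈ s, a e * b e * c e := by
  rw [mul_sum]
  exact sum_congr rfl fun e _ => by ring

theorem averaged_advection_form_of_pv_flux_divergence_general
    {E : Type*} [Fintype E]
    (d l u : E → ℝ) (ni : E → ℝ) (qi : ℝ) (qc : E → ℝ) (Ai : ℝ)
    (hd : ∀ e, d e ≠ 0)
    (qhat grad Ae : E → ℝ)
    (hqhat : ∀ e, qhat e = (qi + qc e) / 2)
    (hgrad : ∀ e, grad e = -(1 / d e) * (qi * ni e + qc e * (-ni e)))
    (hAe : ∀ e, Ae e = 1 / 2 * d e * l e)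
    (hdiv : ∑ e, u e * l e * ni e = 0) :
    (∑ e, qhat e * u e * l e * ni e = ∑ e, Ae e * grad e * u e) ∧
      (∀ dqidt : ℝ,
        dqidt + 1 / Ai * ∑ e, qhat e * u e * l e * ni e = 0 →
          dqidt + ∑ e, Ae e / Ai * grad e * u e = 0) := by
  have flux : ∑ e, qhat e * u e * l e * ni e = ∑ e, Ae e * grad e * u e := by
    simp only [hqhat, hgrad, hAe]
    exact sum_averaged_flux_eq_sum_area_mul_grad univ d l u ni qc qi (fun e _ => hd e) hdiv
  refine ⟨flux, fun dqidt h => ?_⟩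
  rwa [sum_div_mul_mul_eq_one_div_mul_sum, ← flux]

/-- Averaged-advection form of the discrete potential-vorticity flux
divergence around a fixed cell `i`: if the discrete velocity is divergence
free on cell `i`, then `Σ_e q̂_e u_e l_e n_{e,i} = Σ_e A_e [∇_h q]_e u_e`, and
consequently the semi-discrete pure transport scheme
`dq_i/dt + (1/A_i) Σ_e q̂_e u_e l_e n_{e,i} = 0` takes the averaged-advection
form `dq_i/dt + Σ_e (A_e/A_i) [∇_h q]_e u_e = 0`. -/
theorem averaged_advection_form_of_pv_flux_divergence
    {E : Type*} [Fintype E]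
    (d l u : E → ℝ) (ni : E → ℝ) (qi : ℝ) (qc : E → ℝ) (Ai : ℝ)
    (hd : ∀ e, d e ≠ 0)
    (hn : ∀ e, ni e = 1 ∨ ni e = -1)
    (hAi : Ai ≠ 0)
    (qhat grad Ae : E → ℝ)
    (hqhat : ∀ e, qhat e = (qi + qc e) / 2)
    (hgrad : ∀ e, grad e = -(1 / d e) * (qi * ni e + qc e * (-ni e)))
    (hAe : ∀ e, Ae e = 1 / 2 * d e * l e)
    (hdiv : ∑ e, u e * l e * ni e = 0) :
    (∑ e, qhat e * u e * l e * ni e = ∑ e, Ae e * grad e * u e) ∧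
      (∀ dqidt : ℝ,
        dqidt + 1 / Ai * ∑ e, qhat e * u e * l e * ni e = 0 →
          dqidt + ∑ e, Ae e / Ai * grad e * u e = 0) :=
  averaged_advection_form_of_pv_flux_divergence_general d l u ni qi qc Ai hd qhat grad Ae hqhat
    hgrad hAe hdiv
end

section
/- Conservation of the discrete potential enstrophy by the semi-discrete finite volume transport scheme: let C and E be finite sets (cells and edges). Assume each edge e has two distinct incident cells σ(e) ≠ τ(e), weights d_e, l_e ∈ ℝ, and direction indicators n_{e,σ(e)} = 1, n_{e,τ(e)} = −1, and n_{e,i} = 0 for all other cells i; each cell i has area A_i ≠ 0. Let u : E → ℝ be a discrete normal velocity field satisfying the per-cell discrete divergence-free condition Σ_{e∈E} u_e l_e n_{e,i} = 0 for every cell i ∈ C. Suppose q : ℝ → C → ℝ has each component differentiable and satisfies, for all t and all i ∈ C, q_i'(t) = −(1/A_i) Σ_{e∈E} q̂_e(t) u_e l_e n_{e,i}, where q̂_e(t) = (q_{σ(e)}(t) + q_{τ(e)}(t))/2. Then the discrete potential enstrophy t ↦ Σ_{i∈C} A_i q_i(t)² is constant in t. -/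
/-!
Multiplying the scheme by `2 A_i q_i` and summing over cells, summation by parts across the edges
turns the enstrophy tendency into `-Σ_e u_e l_e (q_σ + q_τ)(q_σ - q_τ) = -Σ_e u_e l_e (q_σ² - q_τ²)`;
this is the arithmetic mean at work. Summing by parts back gives `-Σ_i q_i² Σ_e u_e l_e n_{e,i}`,
which vanishes because `u` is divergence free.
-/

open Finset

section Incidence

variable {C E R : Type*} [Fintype C] [Fintype E] [CommRing R]

theorem sum_mul_eq_sub_of_incidence {n : C → R} {a b : C} (hab : a ≠ b) (ha : n a = 1)
    (hb : n b = -1) (h0 : ∀ i, i ≠ a → i ≠ b → n i = 0) (f : C → R) :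
    ∑ i, n i * f i = f a - f b := by
  classical
  rw [← add_sum_erase _ _ (mem_univ a),
    ← add_sum_erase _ _ (mem_erase.2 ⟨hab.symm, mem_univ b⟩), sum_eq_zero, ha, hb]
  · ring
  · intro i hi
    obtain ⟨hib, hia⟩ : i ≠ b ∧ i ≠ a := by simpa using hi
    rw [h0 i hia hib, zero_mul]

variable {σ τ : E → C} {n : E → C → R}

theorem sum_mul_sum_mul_incidence (hστ : ∀ e, σ e ≠ τ e)
    (hnσ : ∀ e, n e (σ e) = 1) (hnτ : ∀ e, n e (τ e) = -1)
    (hn0 : ∀ e, ∀ i, i ≠ σ e → i ≠ τ e → n e i = 0) (f : C → R) (F : E → R) :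
    ∑ i, f i * ∑ e, F e * n e i = ∑ e, F e * (f (σ e) - f (τ e)) := by
  simp_rw [mul_sum]
  rw [sum_comm]
  refine sum_congr rfl fun e _ => ?_
  rw [← sum_mul_eq_sub_of_incidence (hστ e) (hnσ e) (hnτ e) (hn0 e), mul_sum]
  exact sum_congr rfl fun i _ => by ring

end Incidence

theorem sum_enstrophy_tendency_eq_zero {C E : Type*} [Fintype C] [Fintype E]
    {σ τ : E → C} {n : E → C → ℝ} (hστ : ∀ e, σ e ≠ τ e)
    (hnσ : ∀ e, n e (σ e) = 1) (hnτ : ∀ e, n e (τ e) = -1)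
    (hn0 : ∀ e, ∀ i, i ≠ σ e → i ≠ τ e → n e i = 0)
    {A : C → ℝ} (hA : ∀ i, A i ≠ 0) {u l : E → ℝ} (hdiv : ∀ i, ∑ e, u e * l e * n e i = 0)
    (q : C → ℝ) :
    ∑ i, A i * (2 * q i * (-(1 / A i) * ∑ e, (q (σ e) + q (τ e)) / 2 * u e * l e * n e i)) = 0 :=
  have byParts := sum_mul_sum_mul_incidence hστ hnσ hnτ hn0
  calc _ = -2 * ∑ i, q i * ∑ e, (q (σ e) + q (τ e)) / 2 * u e * l e * n e i := by
        rw [mul_sum]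
        refine sum_congr rfl fun i _ => ?_
        field_simp [hA i]
    _ = -∑ e, u e * l e * (q (σ e) ^ 2 - q (τ e) ^ 2) := by
        rw [byParts, mul_sum, ← sum_neg_distrib]
        exact sum_congr rfl fun e _ => by ring
    _ = -∑ i, q i ^ 2 * ∑ e, u e * l e * n e i := by
        rw [byParts]
    _ = 0 := by simp [hdiv]

theorem discrete_potential_enstrophy_conserved_general
    {C E : Type*} [Fintype C] [Fintype E]
    (σ τ : E → C) (hστ : ∀ e, σ e ≠ τ e)
    (l : E → ℝ) (n : E → C → ℝ)
    (hnσ : ∀ e, n e (σ e) = 1) (hnτ : ∀ e, n e (τ e) = -1)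
    (hn0 : ∀ e, ∀ i, i ≠ σ e → i ≠ τ e → n e i = 0)
    (A : C → ℝ) (hA : ∀ i, A i ≠ 0)
    (u : E → ℝ) (hdiv : ∀ i, ∑ e, u e * l e * n e i = 0)
    (q : ℝ → C → ℝ)
    (hq : ∀ i, ∀ t : ℝ,
      HasDerivAt (fun s => q s i)
        (-(1 / A i) * ∑ e, (q t (σ e) + q t (τ e)) / 2 * u e * l e * n e i) t) :
    ∀ t₁ t₂ : ℝ, ∑ i, A i * q t₁ i ^ 2 = ∑ i, A i * q t₂ i ^ 2 := by
  have hderiv : ∀ t, HasDerivAt (fun s => ∑ i, A i * q s i ^ 2) 0 t := fun t => by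
    refine (HasDerivAt.fun_sum fun i _ => ((hq i t).pow 2).const_mul (A i)).congr_deriv ?_
    simpa using sum_enstrophy_tendency_eq_zero hστ hnσ hnτ hn0 hA hdiv (q t)
  exact is_const_of_deriv_eq_zero (fun t => (hderiv t).differentiableAt) fun t => (hderiv t).deriv

/-- Conservation of the discrete potential enstrophy by the semi-discrete
finite volume transport scheme: each edge `e` is shared by exactly two
distinct cells `σ e` and `τ e` with opposite direction indicators, the
discrete velocity `u` is divergence free on every cell, and the cell values
evolve by `q_i' = -(1/A_i) Σ_e q̂_e u_e l_e n_{e,i}` with arithmetic-mean edge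
values `q̂_e = (q_{σ e} + q_{τ e})/2`; then the discrete potential enstrophy
`Σ_i A_i q_i²` is constant in time. -/
theorem discrete_potential_enstrophy_conserved
    {C E : Type*} [Fintype C] [Fintype E]
    (σ τ : E → C) (hστ : ∀ e, σ e ≠ τ e)
    (d l : E → ℝ) (n : E → C → ℝ)
    (hnσ : ∀ e, n e (σ e) = 1) (hnτ : ∀ e, n e (τ e) = -1)
    (hn0 : ∀ e, ∀ i, i ≠ σ e → i ≠ τ e → n e i = 0)
    (A : C → ℝ) (hA : ∀ i, A i ≠ 0)
    (u : E → ℝ) (hdiv : ∀ i, ∑ e, u e * l e * n e i = 0)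
    (q : ℝ → C → ℝ)
    (hq : ∀ i, ∀ t : ℝ,
      HasDerivAt (fun s => q s i)
        (-(1 / A i) * ∑ e, (q t (σ e) + q t (τ e)) / 2 * u e * l e * n e i) t) :
    ∀ t₁ t₂ : ℝ, ∑ i, A i * q t₁ i ^ 2 = ∑ i, A i * q t₂ i ^ 2 :=
  discrete_potential_enstrophy_conserved_general σ τ hστ l n hnσ hnτ hn0 A hA u hdiv q hq
end
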